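/- Let n = 1 and β > 0. There exists a constant c > 0 such that for every x > 0 and every R > 0 with Rx ≥ β, one has γ₋₁(B(x,R)) ≥ c e^{x² + R²/4 + Rx} / x. -/
import Mathlib


open MeasureTheory Real
open scoped ENNReal

/-- The inverse Gaussian measure `γ₋₁` on `ℝ` (case `n = 1`), with density
`π^{1/2} e^{x²}` with respect to Lebesgue measure. -/
noncomputable def gammaM1R : Measure ℝ :=
  volume.withDensity fun x => ENNReal.ofReal (Real.pi ^ ((1 : ℝ) / 2) * Real.exp (x ^ 2))

/-- For `n = 1` and `β > 0` there exists `c > 0` such that for every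
`x > 0` and `R > 0` with `Rx ≥ β`, one has `γ₋₁(B(x,R)) ≥ c e^{x² + R²/4 + Rx} / x`. -/
theorem stmt2 (β : ℝ) (hβ : 0 < β) :
    ∃ c : ℝ, 0 < c ∧ ∀ x : ℝ, 0 < x → ∀ R : ℝ, 0 < R → β ≤ R * x →
      ENNReal.ofReal (c * Real.exp (x ^ 2 + R ^ 2 / 4 + R * x) / x)
        ≤ gammaM1R (Metric.ball x R) := by
  refine ⟨β / 2, by positivity, ?_⟩
  intro x hx R hR hβR
  have hpi : (1 : ℝ) ≤ Real.pi ^ ((1 : ℝ) / 2) := by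
    exact Real.one_le_rpow (by linarith [Real.pi_gt_three]) (by norm_num)
  have hpi0 : (0 : ℝ) < Real.pi ^ ((1 : ℝ) / 2) := by linarith
  rw [gammaM1R, MeasureTheory.withDensity_apply _ measurableSet_ball]
  have hsub : Set.Ioo (x + R / 2) (x + R) ⊆ Metric.ball x R := by
    intro t ht
    rw [Metric.mem_ball, Real.dist_eq, abs_lt]
    exact ⟨by linarith [ht.1], by linarith [ht.2]⟩
  calc ENNReal.ofReal (β / 2 * Real.exp (x ^ 2 + R ^ 2 / 4 + R * x) / x)
      ≤ ENNReal.ofReal (Real.pi ^ ((1 : ℝ) / 2) * Real.exp ((x + R / 2) ^ 2) * (R / 2)) := by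
        apply ENNReal.ofReal_le_ofReal
        have hE : (x + R / 2) ^ 2 = x ^ 2 + R ^ 2 / 4 + R * x := by ring
        rw [hE, div_le_iff₀ hx]
        have h1 : β / 2 ≤ Real.pi ^ ((1 : ℝ) / 2) * (R / 2) * x := by
          nlinarith [Real.exp_pos (x ^ 2 + R ^ 2 / 4 + R * x)]
        nlinarith [Real.exp_pos (x ^ 2 + R ^ 2 / 4 + R * x)]
    _ = ENNReal.ofReal (Real.pi ^ ((1 : ℝ) / 2) * Real.exp ((x + R / 2) ^ 2)) *
          volume (Set.Ioo (x + R / 2) (x + R)) := by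
        rw [Real.volume_Ioo, show x + R - (x + R / 2) = R / 2 by ring,
          ENNReal.ofReal_mul (by positivity)]
    _ = ∫⁻ _ in Set.Ioo (x + R / 2) (x + R),
          ENNReal.ofReal (Real.pi ^ ((1 : ℝ) / 2) * Real.exp ((x + R / 2) ^ 2)) := by
        rw [MeasureTheory.setLIntegral_const]
    _ ≤ ∫⁻ t in Set.Ioo (x + R / 2) (x + R),
          ENNReal.ofReal (Real.pi ^ ((1 : ℝ) / 2) * Real.exp (t ^ 2)) := by
        apply MeasureTheory.setLIntegral_mono' measurableSet_Ioo
        intro t ht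
        apply ENNReal.ofReal_le_ofReal
        apply mul_le_mul_of_nonneg_left _ (le_of_lt hpi0)
        apply Real.exp_le_exp.2
        have h0 : 0 ≤ x + R / 2 := by positivity
        nlinarith [ht.1, ht.2]
    _ ≤ ∫⁻ t in Metric.ball x R,
          ENNReal.ofReal (Real.pi ^ ((1 : ℝ) / 2) * Real.exp (t ^ 2)) :=
        MeasureTheory.lintegral_mono' (MeasureTheory.Measure.restrict_mono hsub le_rfl) le_rfl
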